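/- Let G be a tree (a connected acyclic finite simple graph) with at least four vertices. Then the following are equivalent: (a) G is unmixed and has a bipartition (V, W) with |V| = |W| = n for which V and W are maximal independent sets and there exist maximal independent sets F_0 = V, F_1, …, F_n = W of G with |F_i ∩ F_{i+1}| = n − 1 for every i; (b) G has a bipartition V = {x_1,…,x_n}, W = {y_1,…,y_n} such that (i) {x_i, y_i} is an edge of G for every i, (ii) for each i exactly one of the vertices x_i and y_i has degree 1, and (iii) there exist maximal independent sets F_0 = V, F_1, …, F_n = W of G with |F_i ∩ F_{i+1}| = n − 1 for every i. -/

import Mathlib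

/-- A set of vertices is independent if no two of its elements are adjacent. -/
def IndepSet {α : Type*} (G : SimpleGraph α) (S : Finset α) : Prop :=
  ∀ ⦃u⦄, u ∈ S → ∀ ⦃v⦄, v ∈ S → ¬ G.Adj u v

/-- A maximal independent set: an independent set not properly contained in any
other independent set. -/
def MaxIndepSet {α : Type*} (G : SimpleGraph α) (S : Finset α) : Prop :=
  IndepSet G S ∧ ∀ ⦃T : Finset α⦄, IndepSet G T → S ⊆ T → T = S

/-- `G` is unmixed if all maximal independent sets have the same cardinality. -/
def Unmixed {α : Type*} (G : SimpleGraph α) : Prop :=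
  ∀ ⦃S T : Finset α⦄, MaxIndepSet G S → MaxIndepSet G T → S.card = T.card

/-- `(V, W)` is a bipartition of `G`: the vertex set is the disjoint union of `V` and `W`
and every edge joins a vertex of `V` to a vertex of `W`. -/
def IsBipartition {α : Type*} [Fintype α] [DecidableEq α]
    (G : SimpleGraph α) (V W : Finset α) : Prop :=
  Disjoint V W ∧ V ∪ W = Finset.univ ∧
    ∀ ⦃u v⦄, G.Adj u v → (u ∈ V ∧ v ∈ W) ∨ (u ∈ W ∧ v ∈ V)

/-!
Every independent set meets each edge `xᵢyᵢ` of a perfect matching at most once, so it has `n`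
elements exactly when it meets all of them; a maximal one is forced to do so by an end of degree
one, which gives (b) ⇒ (a). Conversely, unmixedness yields Hall's condition for matching `V` into
`W`. In a tree, if neither `xᵢ` nor `yᵢ` were a leaf, further neighbours `w` of `xᵢ` and `v` of `yᵢ`
would be non-adjacent (no 4-cycles), and a maximal independent set through `v, w` would miss the
pair and have fewer than `n` elements; both ends cannot be leaves since the tree has more than two
vertices.
-/

open Finset Function

section Independence

variable {α : Type*} {G : SimpleGraph α}

theorem maxIndepSet_iff_maximal {M : Finset α} : MaxIndepSet G M ↔ Maximal (IndepSet G) M :=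
  ⟨fun h => ⟨h.1, fun _ hT hMT => (h.2 hT hMT).le⟩,
    fun h => ⟨h.1, fun _ hT hMT => le_antisymm (h.2 hT hMT) hMT⟩⟩

theorem IndepSet.exists_maxIndepSet_superset [Finite α] {S : Finset α} (hS : IndepSet G S) :
    ∃ M, MaxIndepSet G M ∧ S ⊆ M := by
  obtain ⟨M, hSM, hM⟩ := Finite.exists_le_maximal hS
  exact ⟨M, maxIndepSet_iff_maximal.2 hM, hSM⟩

theorem indepSet_pair_of_not_adj [DecidableEq α] {u v : α} (h : ¬G.Adj u v) :
    IndepSet G {u, v} := by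
  simp only [IndepSet, mem_insert, mem_singleton]
  rintro _ (rfl | rfl) _ (rfl | rfl) <;> simp_all [G.adj_comm]

theorem MaxIndepSet.mem_of_forall_adj_notMem {M : Finset α} (hM : MaxIndepSet G M) {a : α}
    (ha : ∀ b, G.Adj a b → b ∉ M) : a ∈ M := by
  classical
  have hins : IndepSet G (insert a M) := by
    intro u hu v hv huv
    rw [mem_insert] at hu hv
    rcases hu with rfl | hu <;> rcases hv with rfl | hv
    · exact G.loopless.irrefl _ huv
    · exact ha v huv hv
    · exact ha u huv.symm hu
    · exact hM.1 hu hv huv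
  rw [← hM.2 hins (subset_insert a M)]
  exact mem_insert_self a M

theorem MaxIndepSet.mem_or_mem_of_adj_of_degree_eq_one {M : Finset α} (hM : MaxIndepSet G M)
    {a b : α} [Fintype (G.neighborSet a)] (hab : G.Adj a b) (ha : G.degree a = 1) :
    a ∈ M ∨ b ∈ M := by
  have hb : ∀ c, G.Adj a c → c = b := fun c hac =>
    (SimpleGraph.degree_eq_one_iff_existsUnique_adj.1 ha).unique hac hab
  by_cases hbM : b ∈ M
  · exact .inr hbM
  · exact .inl (hM.mem_of_forall_adj_notMem fun c hac => hb c hac ▸ hbM)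

theorem IndepSet.card_inter_pair_of_adj [DecidableEq α] {M : Finset α} (hM : IndepSet G M)
    {a b : α} (hab : G.Adj a b) : #(M ∩ {a, b}) = if a ∈ M ∨ b ∈ M then 1 else 0 := by
  by_cases ha : a ∈ M <;> by_cases hb : b ∈ M
  · exact absurd hab (hM ha hb)
  all_goals simp [ha, hb]

end Independence

namespace SimpleGraph

variable {α : Type*} {G : SimpleGraph α}

theorem exists_adj_ne_of_degree_ne_one {a b : α} [Fintype (G.neighborSet a)] (hab : G.Adj a b)
    (ha : G.degree a ≠ 1) : ∃ c, G.Adj a c ∧ c ≠ b := by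
  by_contra! h
  exact ha (degree_eq_one_iff_existsUnique_adj.2 ⟨b, hab, h⟩)

theorem Connected.not_degree_eq_one_and_of_adj [Fintype α] (hG : G.Connected)
    (hcard : 2 < Fintype.card α) {a b : α} [Fintype (G.neighborSet a)]
    [Fintype (G.neighborSet b)] (hab : G.Adj a b) : ¬(G.degree a = 1 ∧ G.degree b = 1) := by
  classical
  rintro ⟨ha, hb⟩
  have hclosed : ∀ {u v}, G.Adj u v → u = a ∨ u = b → v = a ∨ v = b := by
    rintro u v huv (rfl | rfl)
    · exact .inr ((degree_eq_one_iff_existsUnique_adj.1 ha).unique huv hab)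
    · exact .inl ((degree_eq_one_iff_existsUnique_adj.1 hb).unique huv hab.symm)
  have hwalk : ∀ {u v} (p : G.Walk u v), u = a ∨ u = b → v = a ∨ v = b := by
    intro u v p
    induction p with
    | nil => exact id
    | cons huw _ ih => exact fun hu => ih (hclosed huw hu)
  have hsub : (univ : Finset α) ⊆ {a, b} := fun v _ => by
    obtain ⟨p⟩ := hG.preconnected a v
    simpa using hwalk p (.inl rfl)
  have := (card_le_card hsub).trans card_le_two
  rw [card_univ] at this
  omega

theorem IsAcyclic.not_adj_of_adj_of_adj_of_adj (hG : G.IsAcyclic) {a b c d : α}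
    (hab : G.Adj a b) (hac : G.Adj a c) (hbd : G.Adj b d) (hcb : c ≠ b) (hda : d ≠ a) :
    ¬G.Adj c d := by
  intro hcd
  have hpb : (Walk.cons hab (Walk.cons hbd Walk.nil)).IsPath := by
    simp [hab.ne, hbd.ne, hda.symm]
  have hpc : (Walk.cons hac (Walk.cons hcd Walk.nil)).IsPath := by
    simp [hac.ne, hcd.ne, hda.symm]
  have := congrArg (fun p : G.Path a d => p.1.support)
    ((hG.subsingleton_path a d).elim ⟨_, hpb⟩ ⟨_, hpc⟩)
  simp only [Walk.support_cons, Walk.support_nil, List.cons.injEq] at this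
  exact hcb this.2.1.symm

end SimpleGraph

section Bipartite

variable {α : Type*} [Fintype α] [DecidableEq α] {G : SimpleGraph α} {V W : Finset α}

theorem IsBipartition.ne_of_mem (hbip : IsBipartition G V W) {u v : α} (hu : u ∈ V)
    (hv : v ∈ W) : u ≠ v :=
  fun h => disjoint_left.1 hbip.1 hu (h ▸ hv)

theorem IsBipartition.mem_right_of_adj (hbip : IsBipartition G V W) {u v : α} (hu : u ∈ V)
    (huv : G.Adj u v) : v ∈ W :=
  (hbip.2.2 huv).elim And.right fun h => absurd hu (disjoint_right.1 hbip.1 h.1)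

end Bipartite

/-- Hall's condition: for `A ⊆ V` with neighbourhood `N`, the independent set `A ∪ (W \ N)` lies
in a maximal one, of size `|W|`, so `|A| + |W \ N| ≤ |W|`. -/
theorem Unmixed.exists_injective_adj {α ι : Type*} [Finite α] [Fintype ι] {G : SimpleGraph α}
    (hunmix : Unmixed G) {V W : Finset α} (hV : IndepSet G V) (hW : MaxIndepSet G W)
    (hVW : Disjoint V W) {x : ι → α} (hx : Injective x) (hxV : ∀ i, x i ∈ V) :
    ∃ y : ι → α, Injective y ∧ ∀ i, G.Adj (x i) (y i) := by
  classical
  have := Fintype.ofFinite α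
  refine (Fintype.all_card_le_filter_rel_iff_exists_injective fun i a => G.Adj (x i) a).1
    fun s => ?_
  set N : Finset α := {b | ∃ i ∈ s, G.Adj (x i) b}
  have hAV : s.image x ⊆ V := fun _ ha => by
    obtain ⟨i, -, rfl⟩ := mem_image.1 ha
    exact hxV i
  have hindep : IndepSet G (s.image x ∪ (W \ N)) := by
    have hN : ∀ {i b}, i ∈ s → G.Adj (x i) b → b ∉ W \ N := fun hi hib hb =>
      (mem_sdiff.1 hb).2 (mem_filter.2 ⟨mem_univ _, _, hi, hib⟩)
    intro u hu v hv huv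
    rw [mem_union, mem_image] at hu hv
    rcases hu with ⟨i, hi, rfl⟩ | hu <;> rcases hv with ⟨j, hj, rfl⟩ | hv
    · exact hV (hxV i) (hxV j) huv
    · exact hN hi huv hv
    · exact hN hj huv.symm hu
    · exact hW.1 (mem_sdiff.1 hu).1 (mem_sdiff.1 hv).1 huv
  obtain ⟨M, hM, hsub⟩ := hindep.exists_maxIndepSet_superset
  have hle : #(s.image x) + #(W \ N) ≤ #W := by
    rw [← card_union_of_disjoint (hVW.mono hAV sdiff_subset)]
    exact (card_le_card hsub).trans (hunmix hM hW).le
  have := card_le_card_sdiff_add_card (s := W) (t := N)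
  rw [card_image_of_injective s hx] at hle
  omega

section Labelling

variable {α : Type*} [Fintype α] [DecidableEq α] {G : SimpleGraph α} {n : ℕ} {x y : Fin n → α}

theorem IsBipartition.exists_labelling {V W : Finset α} (hbip : IsBipartition G V W)
    (hunmix : Unmixed G) (hV : MaxIndepSet G V) (hW : MaxIndepSet G W) (hn : #V = n) :
    ∃ x y : Fin n → α, Injective x ∧ Injective y ∧ univ.image x = V ∧ univ.image y = W ∧
      ∀ i, G.Adj (x i) (y i) := by
  subst hn
  set x : Fin #V → α := fun i => V.equivFin.symm i
  have hx : Injective x := Subtype.val_injective.comp V.equivFin.symm.injective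
  have hxV : univ.image x = V := by
    ext a
    simp only [mem_image, mem_univ, true_and, x]
    exact ⟨fun ⟨i, hi⟩ => hi ▸ (V.equivFin.symm i).2, fun ha => ⟨V.equivFin ⟨a, ha⟩, by simp⟩⟩
  obtain ⟨y, hy, hadj⟩ := hunmix.exists_injective_adj hV.1 hW hbip.1 hx
    fun i => (V.equivFin.symm i).2
  refine ⟨x, y, hx, hy, hxV, eq_of_subset_of_card_le ?_ ?_, hadj⟩
  · intro b hb
    obtain ⟨i, -, rfl⟩ := mem_image.1 hb
    exact hbip.mem_right_of_adj (V.equivFin.symm i).2 (hadj i)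
  · rw [card_image_of_injective _ hy, card_univ, Fintype.card_fin, hunmix hW hV]

variable (hx : Injective x) (hy : Injective y)
  (hbip : IsBipartition G (univ.image x) (univ.image y)) (hadj : ∀ i, G.Adj (x i) (y i))
include hx hy hbip hadj

theorem IndepSet.card_eq_card_filter_mem_pair {M : Finset α} (hM : IndepSet G M) :
    #M = #{i | x i ∈ M ∨ y i ∈ M} := by
  have hxy : ∀ i j, x i ≠ y j := fun i j =>
    hbip.ne_of_mem (mem_image_of_mem x (mem_univ i)) (mem_image_of_mem y (mem_univ j))
  have hpairs : univ.biUnion (fun i => ({x i, y i} : Finset α)) = univ := by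
    rw [← hbip.2.1]
    ext a
    simp [eq_comm, exists_or]
  have hdisj : ((univ : Finset (Fin n)) : Set (Fin n)).PairwiseDisjoint fun i => M ∩ {x i, y i} :=
    fun i _ j _ hij => by
      refine disjoint_left.2 fun a ha hb => ?_
      simp only [mem_inter, mem_insert, mem_singleton] at ha hb
      rcases ha.2 with rfl | rfl <;> rcases hb.2 with h | h
      exacts [hij (hx h), hxy i j h, hxy j i h.symm, hij (hy h)]
  calc #M = #(univ.biUnion fun i => M ∩ {x i, y i}) := by
        rw [← inter_biUnion, hpairs, inter_univ]
    _ = #{i | x i ∈ M ∨ y i ∈ M} := by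
        rw [card_biUnion hdisj, card_filter]
        exact sum_congr rfl fun i _ => hM.card_inter_pair_of_adj (hadj i)

theorem MaxIndepSet.card_eq_of_degree_eq_one [DecidableRel G.Adj]
    (hdeg : ∀ i, G.degree (x i) = 1 ∨ G.degree (y i) = 1) {M : Finset α}
    (hM : MaxIndepSet G M) : #M = n := by
  rw [hM.1.card_eq_card_filter_mem_pair hx hy hbip hadj, filter_true_of_mem, card_univ,
    Fintype.card_fin]
  intro i _
  rcases hdeg i with h | h
  · exact hM.mem_or_mem_of_adj_of_degree_eq_one (hadj i) h
  · exact (hM.mem_or_mem_of_adj_of_degree_eq_one (hadj i).symm h).symm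

theorem IndepSet.card_lt_of_notMem_pair {M : Finset α} (hM : IndepSet G M) {i : Fin n}
    (hxi : x i ∉ M) (hyi : y i ∉ M) : #M < n := by
  rw [hM.card_eq_card_filter_mem_pair hx hy hbip hadj]
  calc #{i | x i ∈ M ∨ y i ∈ M} < #(univ : Finset (Fin n)) :=
        card_lt_card (filter_ssubset.2 ⟨i, mem_univ i, by simp [hxi, hyi]⟩)
    _ = n := by simp

theorem SimpleGraph.IsAcyclic.degree_eq_one_or [DecidableRel G.Adj] (hG : G.IsAcyclic)
    (hcard : ∀ M, MaxIndepSet G M → #M = n) (i : Fin n) :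
    G.degree (x i) = 1 ∨ G.degree (y i) = 1 := by
  by_contra! h
  obtain ⟨w, hxw, hwy⟩ := SimpleGraph.exists_adj_ne_of_degree_ne_one (hadj i) h.1
  obtain ⟨v, hyv, hvx⟩ := SimpleGraph.exists_adj_ne_of_degree_ne_one (hadj i).symm h.2
  have hvw : IndepSet G {v, w} :=
    indepSet_pair_of_not_adj (hG.not_adj_of_adj_of_adj_of_adj (hadj i).symm hyv hxw hvx hwy)
  obtain ⟨M, hM, hvwM⟩ := hvw.exists_maxIndepSet_superset
  refine (hM.1.card_lt_of_notMem_pair hx hy hbip hadj (i := i) ?_ ?_).ne (hcard M hM)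
  · exact fun hxM => hM.1 hxM (hvwM (by simp)) hxw
  · exact fun hyM => hM.1 hyM (hvwM (by simp)) hyv

end Labelling

/-- Corollary 1.7 (combinatorial content): for a tree `G` with at least four vertices,
the combinatorial `S₂` condition (a) — unmixedness together with a chain of maximal
independent sets `V = F₀, …, Fₙ = W` with consecutive intersections of cardinality
`n - 1` for some bipartition `(V, W)` with `|V| = |W| = n` — is equivalent to (b): the
existence of a labeling `V = {x₁,…,xₙ}`, `W = {y₁,…,yₙ}` such that (i) `{xᵢ,yᵢ}` is an
edge for every `i`, (ii) for each `i` exactly one of `xᵢ`, `yᵢ` has degree one, and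
(iii) such a chain of maximal independent sets exists. -/
theorem tree_S2_characterization {α : Type*} [Fintype α] [DecidableEq α]
    (G : SimpleGraph α) [DecidableRel G.Adj]
    (htree : G.IsTree) (hcard : 4 ≤ Fintype.card α) :
    (∃ (n : ℕ) (V W : Finset α),
      Unmixed G ∧ IsBipartition G V W ∧ V.card = n ∧ W.card = n ∧
      MaxIndepSet G V ∧ MaxIndepSet G W ∧
      ∃ F : ℕ → Finset α,
        F 0 = V ∧ F n = W ∧ (∀ i ≤ n, MaxIndepSet G (F i)) ∧
        ∀ i < n, (F i ∩ F (i + 1)).card = n - 1) ↔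
    (∃ (n : ℕ) (x y : Fin n → α),
      Function.Injective x ∧ Function.Injective y ∧ (∀ i j, x i ≠ y j) ∧
      IsBipartition G (Finset.univ.image x) (Finset.univ.image y) ∧
      (∀ i, G.Adj (x i) (y i)) ∧
      (∀ i, Xor' (G.degree (x i) = 1) (G.degree (y i) = 1)) ∧
      ∃ F : ℕ → Finset α,
        F 0 = Finset.univ.image x ∧ F n = Finset.univ.image y ∧
        (∀ i ≤ n, MaxIndepSet G (F i)) ∧
        ∀ i < n, (F i ∩ F (i + 1)).card = n - 1) := by
  constructor
  · rintro ⟨n, V, W, hunmix, hbip, hVn, -, hV, hW, F, hF0, hFn, hFmax, hFc⟩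
    obtain ⟨x, y, hx, hy, rfl, rfl, hadj⟩ := hbip.exists_labelling hunmix hV hW hVn
    have hcardM : ∀ M, MaxIndepSet G M → #M = n := fun M hM => (hunmix hM hV).trans hVn
    refine ⟨n, x, y, hx, hy, fun i j => hbip.ne_of_mem (by simp) (by simp), hbip, hadj,
      fun i => (xor_iff_or_and_not_and _ _).2 ⟨?_, ?_⟩, F, hF0, hFn, hFmax, hFc⟩
    · exact htree.isAcyclic.degree_eq_one_or hx hy hbip hadj hcardM i
    · exact htree.connected.not_degree_eq_one_and_of_adj (by omega) (hadj i)
  · rintro ⟨n, x, y, hx, hy, -, hbip, hadj, hdeg, F, hF0, hFn, hFmax, hFc⟩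
    have hcardM : ∀ M, MaxIndepSet G M → #M = n := fun M hM =>
      hM.card_eq_of_degree_eq_one hx hy hbip hadj fun i => Xor.or (hdeg i)
    exact ⟨n, _, _, fun S T hS hT => (hcardM S hS).trans (hcardM T hT).symm, hbip,
      by simp [card_image_of_injective _ hx], by simp [card_image_of_injective _ hy],
      hF0 ▸ hFmax 0 n.zero_le, hFn ▸ hFmax n le_rfl, F, hF0, hFn, hFmax, hFc⟩
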